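/- For any two facets F_i, F_j of a Pogorelov polytope P with F_i ∩ F_j = ∅, there exists a vertex of P lying in neither F_i nor F_j. -/

import Mathlib

/-- A combinatorial model of a simple 3-polytope: `m` facets, each given by
its (finite) set of vertices; every vertex lies in exactly three facets, two
distinct facets meet in an edge (two vertices) or not at all. -/
structure SimplePolytope3 (m : ℕ) (V : Type) [Fintype V] [DecidableEq V] where
  facet : Fin m → Finset V
  facet_card : ∀ i, 3 ≤ (facet i).card
  vertex_in_three : ∀ v : V, (Finset.univ.filter (fun i => v ∈ facet i)).card = 3
  inter_edge : ∀ i j, i ≠ j → facet i ∩ facet j = ∅ ∨ (facet i ∩ facet j).card = 2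
  four_le_m : 4 ≤ m

theorem exists_injective_zmod_three_ne {m : ℕ} (hm : 5 ≤ m) (i j : Fin m) :
    ∃ b : ZMod 3 → Fin m, Function.Injective b ∧ ∀ s, b s ≠ i ∧ b s ≠ j := by
  have hcard : 3 ≤ (Finset.univ \ {i, j} : Finset (Fin m)).card := by
    have := Finset.le_card_sdiff {i, j} (Finset.univ : Finset (Fin m))
    rw [Finset.card_univ, Fintype.card_fin] at this
    have := Finset.card_le_two (a := i) (b := j)
    omega
  obtain ⟨T, hT, hT3⟩ := Finset.exists_subset_card_eq hcard
  refine ⟨T.orderEmbOfFin hT3, (T.orderEmbOfFin hT3).injective, fun s => ?_⟩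
  simpa [not_or] using hT (T.orderEmbOfFin_mem hT3 s)

namespace SimplePolytope3

variable {m : ℕ} {V : Type} [Fintype V] [DecidableEq V] (P : SimplePolytope3 m V)

/-- Two facets are adjacent if they are distinct and intersect. -/
def Adjacent (i j : Fin m) : Prop := i ≠ j ∧ (P.facet i ∩ P.facet j).Nonempty

/-- A `k`-belt: a cyclic sequence of `k ≥ 3` pairwise distinct facets such that
consecutive facets (cyclically) are adjacent, non-consecutive ones are disjoint,
and no three of them share a common vertex. -/
def IsBelt (k : ℕ) (b : ZMod k → Fin m) : Prop :=
  3 ≤ k ∧ Function.Injective b ∧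
  (∀ s t : ZMod k, s ≠ t →
    ((P.facet (b s) ∩ P.facet (b t)).Nonempty ↔ (t = s + 1 ∨ s = t + 1))) ∧
  (∀ s t u : ZMod k, s ≠ t → t ≠ u → s ≠ u →
    P.facet (b s) ∩ P.facet (b t) ∩ P.facet (b u) = ∅)

/-- A simple polytope is flag if every nonempty collection of pairwise
intersecting facets has a common vertex. -/
def Flag : Prop :=
  ∀ S : Finset (Fin m), S.Nonempty →
    (∀ i ∈ S, ∀ j ∈ S, (P.facet i ∩ P.facet j).Nonempty) →
    ∃ v, ∀ i ∈ S, v ∈ P.facet i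

/-- A Pogorelov polytope: a simple 3-polytope different from the simplex
(equivalently, with at least 5 facets) having no 3-belts and no 4-belts. -/
def Pogorelov : Prop :=
  5 ≤ m ∧ (¬ ∃ b : ZMod 3 → Fin m, P.IsBelt 3 b) ∧ (¬ ∃ b : ZMod 4 → Fin m, P.IsBelt 4 b)

end SimplePolytope3

/-!
If every vertex lay on `F_i ∪ F_j`, every other facet would meet both `F_i` and `F_j`, since no
facet is contained in another. Two disjoint facets `F_a`, `F_c` other than `F_i`, `F_j` would then
form the 4-belt `(F_i, F_a, F_j, F_c)`. Otherwise any three facets other than `F_i`, `F_j` (there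
are three since `m ≥ 5`) pairwise meet, and they share no vertex, because such a vertex would also
lie on `F_i` or `F_j`, hence on four facets; so they form a 3-belt.
-/

namespace SimplePolytope3

variable {m : ℕ} {V : Type} [Fintype V] [DecidableEq V] (P : SimplePolytope3 m V)

theorem Adjacent.symm {P : SimplePolytope3 m V} {i j : Fin m} (h : P.Adjacent i j) :
    P.Adjacent j i :=
  ⟨h.1.symm, Finset.inter_comm (P.facet i) (P.facet j) ▸ h.2⟩

theorem facet_nonempty (i : Fin m) : (P.facet i).Nonempty :=
  Finset.card_pos.mp (by linarith [P.facet_card i])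

theorem not_facet_subset {i j : Fin m} (hij : i ≠ j) : ¬ P.facet i ⊆ P.facet j := by
  intro hsub
  have hcard := P.facet_card i
  rcases P.inter_edge i j hij with h | h <;> rw [Finset.inter_eq_left.mpr hsub] at h
  · simp [h] at hcard
  · omega

theorem adjacent_of_forall_mem_or_mem {i j k : Fin m}
    (hcover : ∀ v, v ∈ P.facet i ∨ v ∈ P.facet j) (hki : k ≠ i) (hkj : k ≠ j) :
    P.Adjacent i k := by
  refine ⟨hki.symm, ?_⟩
  by_contra hik
  refine P.not_facet_subset hkj fun v hv => (hcover v).resolve_left fun hvi => hik ?_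
  exact ⟨v, Finset.mem_inter.mpr ⟨hvi, hv⟩⟩

theorem filter_mem_facet_eq_image {ι : Type} [Fintype ι] (hι : Fintype.card ι = 3)
    {b : ι → Fin m} (hb : Function.Injective b) {v : V} (hv : ∀ s, v ∈ P.facet (b s)) :
    Finset.univ.filter (fun i => v ∈ P.facet i) = Finset.univ.image b := by
  refine (Finset.eq_of_subset_of_card_le ?_ ?_).symm
  · simpa [Finset.subset_iff] using hv
  · rw [P.vertex_in_three v, Finset.card_image_of_injective _ hb, Finset.card_univ, hι]

theorem exists_eq_of_mem_facet {ι : Type} [Fintype ι] (hι : Fintype.card ι = 3)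
    {b : ι → Fin m} (hb : Function.Injective b) {v : V} (hv : ∀ s, v ∈ P.facet (b s))
    {x : Fin m} (hx : v ∈ P.facet x) : ∃ s, b s = x := by
  simpa [hx] using Finset.ext_iff.mp (P.filter_mem_facet_eq_image hι hb hv) x

theorem isBelt_three {b : ZMod 3 → Fin m} (hb : Function.Injective b)
    (hmeet : ∀ s t, s ≠ t → (P.facet (b s) ∩ P.facet (b t)).Nonempty)
    (hvert : ∀ v, ∃ s, v ∉ P.facet (b s)) : P.IsBelt 3 b := by
  have hcons : ∀ s t : ZMod 3, s ≠ t → t = s + 1 ∨ s = t + 1 := by decide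
  have hall : ∀ s t u : ZMod 3, s ≠ t → t ≠ u → s ≠ u → ∀ r, r = s ∨ r = t ∨ r = u := by decide
  refine ⟨le_rfl, hb, fun s t hst => iff_of_true (hmeet s t hst) (hcons s t hst),
    fun s t u hst htu hsu => Finset.eq_empty_of_forall_notMem fun v hv => ?_⟩
  simp only [Finset.mem_inter] at hv
  obtain ⟨r, hr⟩ := hvert v
  rcases hall s t u hst htu hsu r with rfl | rfl | rfl <;> tauto

theorem isBelt_four {b : ZMod 4 → Fin m} (hadj : ∀ s, P.Adjacent (b s) (b (s + 1)))
    (hopp : ∀ s, Disjoint (P.facet (b s)) (P.facet (b (s + 2)))) : P.IsBelt 4 b := by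
  have hcases : ∀ s t : ZMod 4, s ≠ t → t = s + 1 ∨ s = t + 1 ∨ t = s + 2 := by decide
  have hopp_ne : ∀ s : ZMod 4, ¬ (s + 2 = s + 1 ∨ s = s + 2 + 1) := by decide
  have hopp_pair : ∀ s t u : ZMod 4, s ≠ t → t ≠ u → s ≠ u → t = s + 2 ∨ u = s + 2 ∨ u = t + 2 := by
    decide
  refine ⟨by norm_num, fun s t hst => ?_, fun s t hst => ?_, fun s t u hst htu hsu => ?_⟩
  · by_contra hne
    rcases hcases s t hne with rfl | rfl | rfl
    · exact (hadj s).1 hst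
    · exact (hadj t).1 hst.symm
    · have hself := hopp s
      rw [← hst, disjoint_self, Finset.bot_eq_empty] at hself
      exact (P.facet_nonempty (b s)).ne_empty hself
  · rcases hcases s t hst with rfl | rfl | rfl
    · exact iff_of_true (hadj s).2 (Or.inl rfl)
    · exact iff_of_true (hadj t).symm.2 (Or.inr rfl)
    · exact iff_of_false (fun h => Finset.not_disjoint_iff_nonempty_inter.mpr h (hopp s))
        (hopp_ne s)
  · have hopp' : ∀ s v, v ∈ P.facet (b s) → v ∉ P.facet (b (s + 2)) :=
      fun s _ hv => Finset.disjoint_left.mp (hopp s) hv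
    refine Finset.eq_empty_of_forall_notMem fun v hv => ?_
    simp only [Finset.mem_inter] at hv
    rcases hopp_pair s t u hst htu hsu with rfl | rfl | rfl <;>
      exact hopp' _ v (by tauto) (by tauto)

theorem isBelt_four_of_forall_mem_or_mem {i j a c : Fin m}
    (hcover : ∀ v, v ∈ P.facet i ∨ v ∈ P.facet j) (hij : Disjoint (P.facet i) (P.facet j))
    (hai : a ≠ i) (haj : a ≠ j) (hci : c ≠ i) (hcj : c ≠ j)
    (hac : Disjoint (P.facet a) (P.facet c)) : P.IsBelt 4 ![i, a, j, c] := by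
  have hcover' : ∀ v, v ∈ P.facet j ∨ v ∈ P.facet i := fun v => (hcover v).symm
  refine P.isBelt_four (fun s => ?_) (fun s => ?_) <;> fin_cases s
  · exact P.adjacent_of_forall_mem_or_mem hcover hai haj
  · exact (P.adjacent_of_forall_mem_or_mem hcover' haj hai).symm
  · exact P.adjacent_of_forall_mem_or_mem hcover' hcj hci
  · exact (P.adjacent_of_forall_mem_or_mem hcover hci hcj).symm
  exacts [hij, hac, hij.symm, hac.symm]

end SimplePolytope3

open SimplePolytope3 in
/-- For any two disjoint facets of a Pogorelov polytope, there exists a vertex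
of the polytope lying in neither facet. -/
theorem pogorelov_vertex_outside_two_disjoint_facets
    {m : ℕ} {V : Type} [Fintype V] [DecidableEq V]
    (P : SimplePolytope3 m V) (hP : P.Pogorelov)
    (i j : Fin m) (hdisj : P.facet i ∩ P.facet j = ∅) :
    ∃ v : V, v ∉ P.facet i ∧ v ∉ P.facet j := by
  by_contra! hout
  have hcover : ∀ v, v ∈ P.facet i ∨ v ∈ P.facet j := fun v => or_iff_not_imp_left.mpr (hout v)
  obtain ⟨hm, hno3, hno4⟩ := hP
  have hmeet : ∀ a c, a ≠ i → a ≠ j → c ≠ i → c ≠ j → (P.facet a ∩ P.facet c).Nonempty := by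
    intro a c hai haj hci hcj
    by_contra hac
    exact hno4 ⟨_, P.isBelt_four_of_forall_mem_or_mem hcover
      (Finset.disjoint_iff_inter_eq_empty.mpr hdisj) hai haj hci hcj
      (Finset.disjoint_iff_inter_eq_empty.mpr (Finset.not_nonempty_iff_eq_empty.mp hac))⟩
  obtain ⟨b, hb, hbij⟩ := exists_injective_zmod_three_ne hm i j
  refine hno3 ⟨b, P.isBelt_three hb (fun s t _ => hmeet _ _ (hbij s).1 (hbij s).2 (hbij t).1
    (hbij t).2) fun v => ?_⟩
  by_contra! hv
  rcases hcover v with h | h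
  · obtain ⟨s, hs⟩ := P.exists_eq_of_mem_facet (ZMod.card 3) hb hv h
    exact (hbij s).1 hs
  · obtain ⟨s, hs⟩ := P.exists_eq_of_mem_facet (ZMod.card 3) hb hv h
    exact (hbij s).2 hs
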